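/- For every integer k ≥ 2 and every n ≥ 0, B_k(n+1) = Σ_{j_1 + ⋯ + j_k = n} (n!/(j_1!⋯j_k!))·B_1(j_1)·B_2(j_2)⋯B_k(j_k), where the sum is over all k-tuples (j_1, …, j_k) of nonnegative integers with j_1 + ⋯ + j_k = n, and B_1(j) = 1 for all j. -/

import Mathlib

open scoped Nat

/-- The `k`-times iterated exponential function: `expIter 0 = id`,
`expIter (k+1) x = exp (expIter k x)`. -/
noncomputable def expIter : ℕ → ℝ → ℝ
  | 0 => id
  | k + 1 => fun x => Real.exp (expIter k x)

/-- `BellB k n` is the `n`-th derivative of the `k`-times iterated exponential at `0`,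
so that `expIter k x = ∑ n, BellB k n * x ^ n / n !`. -/
noncomputable def BellB (k n : ℕ) : ℝ := iteratedDeriv n (expIter k) 0

/-- The Bell numbers of order `k`: `bellOrd k n = BellB k n / expIter k 0`. -/
noncomputable def bellOrd (k n : ℕ) : ℝ := BellB k n / expIter k 0


/-!
Differentiating `exp_{k+1} = exp ∘ exp_k` gives `exp_{k+1}' = exp_{k+1} · exp_k'`, so
`exp_k' = exp_1 · exp_2 ⋯ exp_k`. The `n`-th derivative of this product is given by the general
Leibniz rule, whose coefficients are multinomial; at `0` it is the stated sum.
-/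

open Finset

theorem Nat.cast_multinomial {ι K : Type*} [Semifield K] [CharZero K] (s : Finset ι)
    (f : ι → ℕ) : (Nat.multinomial s f : K) = (∑ i ∈ s, f i)! / ∏ i ∈ s, ((f i)! : K) := by
  rw [Nat.multinomial, Nat.cast_div (Nat.prod_factorial_dvd_factorial_sum s f)
    (Nat.cast_ne_zero.2 (Nat.prod_factorial_pos s f).ne'), Nat.cast_prod]

theorem iteratedDeriv_fun_finset_prod {ι 𝕜 𝔸 : Type*} [NontriviallyNormedField 𝕜]
    [NormedCommRing 𝔸] [NormedAlgebra 𝕜 𝔸] [DecidableEq ι] {s : Finset ι} {f : ι → 𝕜 → 𝔸}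
    {n : ℕ} {x : 𝕜} (hf : ∀ i ∈ s, ContDiffAt 𝕜 n (f i) x) :
    iteratedDeriv n (fun y ↦ ∏ i ∈ s, f i y) x =
      ∑ k ∈ s.piAntidiag n, (Nat.multinomial s k : 𝔸) * ∏ i ∈ s, iteratedDeriv (k i) (f i) x := by
  induction s using Finset.cons_induction generalizing n with
  | empty => cases n <;> simp [iteratedDeriv_succ']
  | cons i s hi ih =>
    rw [forall_mem_cons] at hf
    simp only [prod_cons]
    rw [iteratedDeriv_fun_mul hf.1 (contDiffAt_prod hf.2), piAntidiag_cons, sum_disjiUnion,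
      Nat.sum_antidiagonal_eq_sum_range_succ_mk]
    refine sum_congr rfl fun m hm ↦ ?_
    rw [ih fun t ht ↦ (hf.2 t ht).of_le (by exact_mod_cast n.sub_le m), mul_sum, sum_map]
    refine sum_congr rfl fun q hq ↦ ?_
    simp only [addRightEmbedding_apply, mem_piAntidiag] at hq ⊢
    have hqi : q i = 0 := not_imp_comm.1 (hq.2 i) hi
    set g := q + fun t ↦ if t = i then m else 0
    have hgs : ∀ t ∈ s, g t = q t := fun t ht ↦ by simp [g, ne_of_mem_of_not_mem ht hi]
    have hgi : g i = m := by simp [g, hqi]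
    rw [Nat.multinomial_cons, Nat.multinomial_congr hgs,
      prod_congr (f := fun t ↦ iteratedDeriv (g t) (f t) x) rfl fun t ht ↦ by rw [hgs t ht],
      sum_congr rfl hgs, hgi, hq.1, Nat.add_sub_of_le (mem_range_succ_iff.1 hm)]
    push_cast
    ring

theorem contDiff_expIter {n : WithTop ℕ∞} (k : ℕ) : ContDiff ℝ n (expIter k) := by
  induction k with
  | zero => exact contDiff_id
  | succ k ih => exact Real.contDiff_exp.comp ih

theorem deriv_expIter (k : ℕ) : deriv (expIter k) = fun x ↦ ∏ i : Fin k, expIter (i + 1) x := by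
  induction k with
  | zero => exact deriv_id'
  | succ k ih =>
    funext x
    have hk : HasDerivAt (expIter k) (deriv (expIter k) x) x :=
      ((contDiff_expIter (n := 1) k).differentiable one_ne_zero x).hasDerivAt
    have hexp : HasDerivAt (expIter (k + 1)) (Real.exp (expIter k x) * deriv (expIter k) x) x :=
      (Real.hasDerivAt_exp _).comp x hk
    rw [hexp.deriv, ih, Fin.prod_univ_castSucc, mul_comm]
    rfl

theorem BellB_succ_eq_sum_general (k : ℕ) (n : ℕ) :
    BellB k (n + 1) =
      ∑ j ∈ Finset.Nat.antidiagonalTuple k n,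
        ((n ! : ℝ) / ∏ i : Fin k, ((j i)! : ℝ)) * ∏ i : Fin k, BellB ((i : ℕ) + 1) (j i) := by
  rw [BellB, iteratedDeriv_succ', deriv_expIter,
    iteratedDeriv_fun_finset_prod fun i _ ↦ (contDiff_expIter _).contDiffAt,
    ← piAntidiag_univ_fin_eq_antidiagonalTuple]
  refine sum_congr rfl fun j hj ↦ ?_
  rw [Nat.cast_multinomial, (mem_piAntidiag.1 hj).1]
  rfl

/-- Recursion: for `k ≥ 2` and every `n`,
`BellB k (n+1) = ∑_{j₁+⋯+j_k = n} (n! / (j₁!⋯j_k!)) * B₁(j₁)⋯B_k(j_k)`. -/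
theorem BellB_succ_eq_sum (k : ℕ) (hk : 2 ≤ k) (n : ℕ) :
    BellB k (n + 1) =
      ∑ j ∈ Finset.Nat.antidiagonalTuple k n,
        ((n ! : ℝ) / ∏ i : Fin k, ((j i)! : ℝ)) * ∏ i : Fin k, BellB ((i : ℕ) + 1) (j i) :=
  BellB_succ_eq_sum_general k n
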